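/- Let z₁, z₁' ∈ ℂ with z₁ ∉ {0,1}, z₁' ∉ {0,1}, z₁ + z₁' ≠ 1, and p(z₁, z₁') = 0, where p(u,v) = v³u + v²u² + vu³ − v² − 3vu − u² + 2v + 2u − 1. Set z₂' = z₁·z₁' / ((z₁ − 1)(z₁' − 1)), z₃ = −(1 − z₁ − z₁')² / (z₁(1 − z₁)(1 − z₁')), and z₃' = −(1 − z₁ − z₁')² / (z₁'(1 − z₁)(1 − z₁')). Then z₁'·(1/(1 − z₁)) − z₁'·(1/(1 − z₁))·z₁·((z₂' − 1)/z₂')²·((z₃' − 1)/z₃')²·z₃ = z₁/(1 − z₁') + z₁'/(1 − z₁). -/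

import Mathlib

/-!
With `s = 1 - z₁ - z₁'` and `q = s² + z₁'(1 - z₁)(1 - z₁')` the two edge parameters simplify to
`ζ₂(z₂') = -s / (z₁ z₁')` and `ζ₂(z₃') = q / s²`. After clearing denominators the claimed identity
becomes `q² = z₁³ z₁' (1 - z₁)²`, which is the defining equation of `V₀` in disguise:
`q² - z₁³ z₁' (1 - z₁)² = p(z₁, z₁') · (z₁ z₁' - (1 - z₁)²)`.
-/

theorem sq_eq_of_six_two_two_curve {R : Type*} [CommRing R] {u v : R}
    (hp : v ^ 3 * u + v ^ 2 * u ^ 2 + v * u ^ 3 - v ^ 2 - 3 * v * u - u ^ 2 + 2 * v + 2 * u - 1 = 0) :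
    ((1 - u - v) ^ 2 + v * (1 - u) * (1 - v)) ^ 2 = u ^ 3 * v * (1 - u) ^ 2 := by
  linear_combination (u * v - (1 - u) ^ 2) * hp

section

variable {K : Type*} [Field K] {u v z : K}

theorem sub_one_div_eq_of_eq_mul_div (hu0 : u ≠ 0) (hv0 : v ≠ 0) (hu1 : u ≠ 1) (hv1 : v ≠ 1)
    (hz : z = u * v / ((u - 1) * (v - 1))) : (z - 1) / z = (u + v - 1) / (u * v) := by
  subst hz
  field_simp
  ring

theorem sub_one_div_eq_of_eq_neg_sq_div (hv0 : v ≠ 0) (hu1 : u ≠ 1) (hv1 : v ≠ 1)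
    (hs : 1 - u - v ≠ 0) (hz : z = -(1 - u - v) ^ 2 / (v * (1 - u) * (1 - v))) :
    (z - 1) / z = ((1 - u - v) ^ 2 + v * (1 - u) * (1 - v)) / (1 - u - v) ^ 2 := by
  subst hz
  field_simp
  ring

end

theorem six_two_two_cusp_parameter_formula (z₁ z₁' : ℂ)
    (h₁0 : z₁ ≠ 0) (h₁1 : z₁ ≠ 1) (h₁'0 : z₁' ≠ 0) (h₁'1 : z₁' ≠ 1)
    (hsum : z₁ + z₁' ≠ 1)
    (hp : z₁' ^ 3 * z₁ + z₁' ^ 2 * z₁ ^ 2 + z₁' * z₁ ^ 3 - z₁' ^ 2 - 3 * z₁' * z₁ -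
        z₁ ^ 2 + 2 * z₁' + 2 * z₁ - 1 = 0)
    (z₂' z₃ z₃' : ℂ)
    (hz₂' : z₂' = z₁ * z₁' / ((z₁ - 1) * (z₁' - 1)))
    (hz₃ : z₃ = -(1 - z₁ - z₁') ^ 2 / (z₁ * (1 - z₁) * (1 - z₁')))
    (hz₃' : z₃' = -(1 - z₁ - z₁') ^ 2 / (z₁' * (1 - z₁) * (1 - z₁'))) :
    z₁' * (1 / (1 - z₁)) -
        z₁' * (1 / (1 - z₁)) * z₁ * ((z₂' - 1) / z₂') ^ 2 * ((z₃' - 1) / z₃') ^ 2 * z₃ =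
      z₁ / (1 - z₁') + z₁' / (1 - z₁) := by
  have hs : 1 - z₁ - z₁' ≠ 0 := fun h ↦ hsum (by linear_combination -h)
  rw [sub_one_div_eq_of_eq_mul_div h₁0 h₁'0 h₁1 h₁'1 hz₂',
    sub_one_div_eq_of_eq_neg_sq_div h₁'0 h₁1 h₁'1 hs hz₃', hz₃]
  field_simp
  linear_combination (1 - z₁ - z₁') ^ 2 * sq_eq_of_six_two_two_curve hp
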